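/- Assume n ≥ 2, M_{{1}} ≤ M_{{2}}, min_{x∈Δ_m} u^L(x,2) < M_{{1}}, and that for j ∈ {1,2} there are a_j ∈ ℝ^m, γ_j > 0, β_j ∈ ℝ with u^L(x,j) = γ_j·(a_j·x) + β_j for all x ∈ Δ_m. Set d_j* = (M_{{1,2}} − β_j)/γ_j for j ∈ {1,2}, and for d₁, d₂ ∈ ℝ define P₁(d₁,d₂) = {x ∈ Δ_m : a_2·x ≥ d₂ and a_1·x ≤ d₁} and P₂(d₁,d₂) = {x ∈ Δ_m : a_2·x ≤ d₂}. If d₁ ≤ d₁* and d₂ ≤ d₂*, then for each j ∈ {1,2}, if P_j(d₁,d₂) ≠ ∅ then max_{x ∈ P_j(d₁,d₂)} u^L(x,j) = γ_j·d_j + β_j. -/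

import Mathlib

open scoped Classical
open Finset

noncomputable section

/-- The leader's mixed-strategy simplex Δ_m. -/
def simplex (m : ℕ) : Set (Fin m → ℝ) := stdSimplex ℝ (Fin m)

/-- Linear extension of a payoff matrix to mixed strategies: u(x,j) = ∑ i, x i * u i j. -/
def pay {m n : ℕ} (u : Fin m → Fin n → ℝ) (x : Fin m → ℝ) (j : Fin n) : ℝ :=
  ∑ i, x i * u i j

/-- Inner product on ℝ^m. -/
def dot {m : ℕ} (a x : Fin m → ℝ) : ℝ := ∑ i, a i * x i

/-- min_{j ∈ S} u(x, j). -/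
def minOnS {m n : ℕ} (u : Fin m → Fin n → ℝ) (S : Set (Fin n)) (x : Fin m → ℝ) : ℝ :=
  sInf ((fun j => pay u x j) '' S)

/-- The leader's maximin value M_S = max_{x∈Δ_m} min_{j∈S} u(x,j). -/
def Mval {m n : ℕ} (u : Fin m → Fin n → ℝ) (S : Set (Fin n)) : ℝ :=
  sSup (minOnS u S '' simplex m)

/-- The set 𝓜_S of maximin strategies. -/
def argMM {m n : ℕ} (u : Fin m → Fin n → ℝ) (S : Set (Fin n)) : Set (Fin m → ℝ) :=
  {x ∈ simplex m | minOnS u S x = Mval u S}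

/-- The follower's best-response set BR(x) = argmax_j uF(x,j). -/
def BR {m n : ℕ} (uF : Fin m → Fin n → ℝ) (x : Fin m → ℝ) : Set (Fin n) :=
  {j | ∀ j', pay uF x j' ≤ pay uF x j}

/-- Strong Stackelberg equilibrium of the game (uL, uF). -/
def SSE {m n : ℕ} (uL uF : Fin m → Fin n → ℝ) (x : Fin m → ℝ) (j : Fin n) : Prop :=
  x ∈ simplex m ∧ j ∈ BR uF x ∧
    ∀ x' ∈ simplex m, ∀ j' ∈ BR uF x', pay uL x' j' ≤ pay uL x j

/-- (x, j) is inducible with respect to the leader payoff uL. -/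
def Inducible {m n : ℕ} (uL : Fin m → Fin n → ℝ) (x : Fin m → ℝ) (j : Fin n) : Prop :=
  ∃ uF : Fin m → Fin n → ℝ, SSE uL uF x j

/-- μ is a (maximin-)cover of S w.r.t. uL: max_{x∈𝓜_S} max_{j∈BR(x)} uL(x,j) < M_S. -/
def IsCover {m n : ℕ} (uL μ : Fin m → Fin n → ℝ) (S : Set (Fin n)) : Prop :=
  ∀ x ∈ argMM uL S, ∀ j ∈ BR μ x, pay uL x j < Mval uL S

/-- μ is a proper cover of S w.r.t. uL. -/
def IsProperCover {m n : ℕ} (uL μ : Fin m → Fin n → ℝ) (S : Set (Fin n)) : Prop :=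
  IsCover uL μ S ∧ ∀ x ∈ simplex m, ∀ j ∈ S, j ∉ BR μ x

/-- P₁(d₁,d₂) = {x ∈ Δ_m : a₂·x ≥ d₂ and a₁·x ≤ d₁}. -/
def P1 {m : ℕ} (a1 a2 : Fin m → ℝ) (d1 d2 : ℝ) : Set (Fin m → ℝ) :=
  {x ∈ simplex m | d2 ≤ dot a2 x ∧ dot a1 x ≤ d1}

/-- P₂(d₁,d₂) = {x ∈ Δ_m : a₂·x ≤ d₂}. -/
def P2 {m : ℕ} (a2 : Fin m → ℝ) (d2 : ℝ) : Set (Fin m → ℝ) :=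
  {x ∈ simplex m | dot a2 x ≤ d2}

/-! On `P_j(d₁, d₂)` we have `a_j · x ≤ d_j`, so `γ_j d_j + β_j` bounds `u^L(·, j)` there, and it is
attained on the level set `a_j · x = d_j`: a maximin point `x̂` of `{1, 2}` has
`u^L(x̂, j) ≥ M_{1,2}`, i.e. `a_j · x̂ ≥ d_j* ≥ d_j`, so along the segment from a point of `P_j(d₁, d₂)`
to `x̂` the affine function `a_j · x` takes the value `d_j`, at a point that stays in `P_j(d₁, d₂)` by
convexity. -/

section LevelSet

variable {𝕜 E β : Type*} [Field 𝕜] [LinearOrder 𝕜] [IsStrictOrderedRing 𝕜] [AddCommGroup E]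
  [Module 𝕜 E] [Preorder β]

theorem AffineMap.exists_mem_segment_apply_eq (f : E →ᵃ[𝕜] 𝕜) {x y : E} {d : 𝕜}
    (hx : f x ≤ d) (hy : d ≤ f y) : ∃ z ∈ segment 𝕜 x y, f z = d := by
  have hd : d ∈ f '' segment 𝕜 x y := by
    rw [image_segment, segment_eq_Icc (hx.trans hy)]
    exact ⟨hx, hy⟩
  exact hd

theorem Convex.isGreatest_comp_on_sublevel {C : Set E} (hC : Convex 𝕜 C) (f : E →ᵃ[𝕜] 𝕜)
    {φ : 𝕜 → β} (hφ : Monotone φ) {g : E → β} (hg : ∀ z ∈ C, g z = φ (f z)) {x y : E} {d : 𝕜}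
    (hxC : x ∈ C) (hx : f x ≤ d) (hyC : y ∈ C) (hy : d ≤ f y) :
    IsGreatest {v : β | ∃ z ∈ {z ∈ C | f z ≤ d}, v = g z} (φ d) := by
  obtain ⟨z, hz, hzd⟩ := f.exists_mem_segment_apply_eq hx hy
  have hzC : z ∈ C := hC.segment_subset hxC hyC hz
  refine ⟨⟨z, ⟨hzC, hzd.le⟩, by rw [hg z hzC, hzd]⟩, ?_⟩
  rintro v ⟨w, ⟨hwC, hwd⟩, rfl⟩
  rw [hg w hwC]
  exact hφ hwd

end LevelSet

def dotLinear {m : ℕ} (a : Fin m → ℝ) : (Fin m → ℝ) →ₗ[ℝ] ℝ := dotProductBilin ℝ ℝ a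

theorem dotLinear_apply {m : ℕ} (a x : Fin m → ℝ) : dotLinear a x = dot a x := rfl

theorem continuous_pay {m n : ℕ} (u : Fin m → Fin n → ℝ) (j : Fin n) :
    Continuous fun x => pay u x j :=
  continuous_finsetSum _ fun i _ => (continuous_apply i).mul continuous_const

theorem minOnS_pair {m n : ℕ} (u : Fin m → Fin n → ℝ) (j k : Fin n) (x : Fin m → ℝ) :
    minOnS u {j, k} x = min (pay u x j) (pay u x k) := by
  rw [minOnS, Set.image_pair, csInf_pair]

theorem exists_mem_simplex_Mval_pair_le {m n : ℕ} (u : Fin m → Fin n → ℝ) (j k : Fin n)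
    (hne : (simplex m).Nonempty) :
    ∃ x ∈ simplex m, Mval u {j, k} ≤ pay u x j ∧ Mval u {j, k} ≤ pay u x k := by
  have hcont : Continuous (minOnS u {j, k}) := by
    simpa only [funext (minOnS_pair u j k)] using (continuous_pay u j).min (continuous_pay u k)
  obtain ⟨x, hx, hmax⟩ :=
    (isCompact_stdSimplex ℝ (Fin m)).exists_isMaxOn hne hcont.continuousOn
  have hM : Mval u {j, k} = min (pay u x j) (pay u x k) := by
    rw [← minOnS_pair]
    refine IsGreatest.csSup_eq ⟨⟨x, hx, rfl⟩, ?_⟩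
    rintro v ⟨y, hy, rfl⟩
    exact hmax hy
  exact ⟨x, hx, hM ▸ min_le_left _ _, hM ▸ min_le_right _ _⟩

theorem max_on_Pj_general {m n : ℕ}
    (uL : Fin m → Fin n → ℝ) (j1 j2 : Fin n)
    (a1 a2 : Fin m → ℝ) (γ1 γ2 : ℝ) (hγ1 : 0 < γ1) (hγ2 : 0 < γ2) (β1 β2 : ℝ)
    (h1 : ∀ x ∈ simplex m, pay uL x j1 = γ1 * dot a1 x + β1)
    (h2 : ∀ x ∈ simplex m, pay uL x j2 = γ2 * dot a2 x + β2)
    (d1 d2 : ℝ)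
    (hd1 : d1 ≤ (Mval uL {j1, j2} - β1) / γ1)
    (hd2 : d2 ≤ (Mval uL {j1, j2} - β2) / γ2) :
    ((P1 a1 a2 d1 d2).Nonempty →
      IsGreatest {v : ℝ | ∃ x ∈ P1 a1 a2 d1 d2, v = pay uL x j1} (γ1 * d1 + β1)) ∧
    ((P2 a2 d2).Nonempty →
      IsGreatest {v : ℝ | ∃ x ∈ P2 a2 d2, v = pay uL x j2} (γ2 * d2 + β2)) := by
  have hφ : ∀ {γ β : ℝ}, 0 < γ → Monotone fun t => γ * t + β := fun hγ _ _ h => by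
    dsimp only; gcongr
  have hreach : ∀ {γ β d : ℝ} {a x : Fin m → ℝ}, 0 < γ → d ≤ (Mval uL {j1, j2} - β) / γ →
      Mval uL {j1, j2} ≤ γ * dot a x + β → d ≤ dot a x := fun hγ hd hM =>
    hd.trans <| (div_le_iff₀' hγ).2 <| by linarith
  constructor
  · rintro ⟨y, hy, hy2, hy1⟩
    obtain ⟨x, hx, hx1, hx2⟩ := exists_mem_simplex_Mval_pair_le uL j1 j2 ⟨y, hy⟩
    have hC : Convex ℝ {x ∈ simplex m | d2 ≤ dotLinear a2 x} :=
      (convex_stdSimplex ℝ (Fin m)).inter (convex_halfSpace_ge (dotLinear a2).isLinear d2)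
    have key := hC.isGreatest_comp_on_sublevel (dotLinear a1).toAffineMap (hφ hγ1)
      (fun z hz => h1 z hz.1) ⟨hy, hy2⟩ hy1
      ⟨hx, hreach hγ2 hd2 (h2 x hx ▸ hx2)⟩ (hreach hγ1 hd1 (h1 x hx ▸ hx1))
    simpa only [P1, LinearMap.coe_toAffineMap, dotLinear_apply, Set.mem_ofPred_eq, and_assoc] using key
  · rintro ⟨y, hy, hy2⟩
    obtain ⟨x, hx, -, hx2⟩ := exists_mem_simplex_Mval_pair_le uL j1 j2 ⟨y, hy⟩
    exact (convex_stdSimplex ℝ (Fin m)).isGreatest_comp_on_sublevel (dotLinear a2).toAffineMap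
      (hφ hγ2) h2 hy hy2 hx (hreach hγ2 hd2 (h2 x hx ▸ hx2))

/-- for d₁ ≤ d₁* and d₂ ≤ d₂*, if P_j(d₁,d₂) ≠ ∅ then
max_{x∈P_j(d₁,d₂)} u^L(x,j) = γ_j·d_j + β_j (j ∈ {1,2}; actions 1, 2 are j1, j2). -/
theorem max_on_Pj {m n : ℕ} (hm : 0 < m)
    (uL : Fin m → Fin n → ℝ) (j1 j2 : Fin n) (hj : j1 ≠ j2)
    (hM : Mval uL {j1} ≤ Mval uL {j2})
    (hmin : sInf ((fun x => pay uL x j2) '' simplex m) < Mval uL {j1})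
    (a1 a2 : Fin m → ℝ) (γ1 γ2 : ℝ) (hγ1 : 0 < γ1) (hγ2 : 0 < γ2) (β1 β2 : ℝ)
    (h1 : ∀ x ∈ simplex m, pay uL x j1 = γ1 * dot a1 x + β1)
    (h2 : ∀ x ∈ simplex m, pay uL x j2 = γ2 * dot a2 x + β2)
    (d1 d2 : ℝ)
    (hd1 : d1 ≤ (Mval uL {j1, j2} - β1) / γ1)
    (hd2 : d2 ≤ (Mval uL {j1, j2} - β2) / γ2) :
    ((P1 a1 a2 d1 d2).Nonempty →
      IsGreatest {v : ℝ | ∃ x ∈ P1 a1 a2 d1 d2, v = pay uL x j1} (γ1 * d1 + β1)) ∧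
    ((P2 a2 d2).Nonempty →
      IsGreatest {v : ℝ | ∃ x ∈ P2 a2 d2, v = pay uL x j2} (γ2 * d2 + β2)) :=
  max_on_Pj_general uL j1 j2 a1 a2 γ1 γ2 hγ1 hγ2 β1 β2 h1 h2 d1 d2 hd1 hd2
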